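/- arXiv:1112.5630 — 5 statements merged into one kernel-verified Lean document; each statement's English description precedes it below -/
import Mathlib

section
/- Let H be an m × n matrix over GF(2) of full row rank m, let 0 ≤ τ < 1/2, and let S be uniformly distributed on (ZMod 2)^m. Then the probability that the coset with syndrome S contains a low-weight word satisfies Pr[∃ w ∈ (ZMod 2)^n with Hw = S and wt(w) ≤ τn] ≤ 2^{-(m − n·h_b(τ))}, where h_b(τ) := −τ log₂ τ − (1−τ) log₂(1−τ) is the binary entropy function. (This is the false-acceptance-rate bound P_FA ≤ 2^{-n(m/n − h_b(τ))} for the ECC-based fuzzy commitment and secure sketch systems.) -/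
/-- Probability of the event `P` under the uniform distribution on the finite type `Ω`. -/
noncomputable def unifProb (Ω : Type*) [Fintype Ω] (P : Ω → Prop) : ℝ :=
  (Nat.card {ω : Ω // P ω} : ℝ) / (Fintype.card Ω : ℝ)

/-- The binary entropy function `h_b(τ) = -τ log₂ τ - (1-τ) log₂ (1-τ)`. -/
noncomputable def binEnt (τ : ℝ) : ℝ :=
  -τ * Real.logb 2 τ - (1 - τ) * Real.logb 2 (1 - τ)

/-!
The syndromes `s` with a low-weight preimage form the image under `H` of the Hamming ball of
radius `τn`, so there are at most as many of them as points in the ball, namely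
`∑_{k ≤ τn} C(n, k)`. Since `τ ≤ 1/2`, every weight `k ≤ τn` has
`τ^k (1-τ)^(n-k) ≥ τ^(τn) (1-τ)^((1-τ)n) = 2^(-n h_b(τ))`, and the binomial theorem
`∑_k C(n, k) τ^k (1-τ)^(n-k) = 1` then bounds the ball by `2^(n h_b(τ))`.
-/

open Finset

lemma card_exists_apply_eq_and_le {α β : Type*} [Finite α] (f : α → β) (P : α → Prop) :
    Nat.card {b // ∃ a, f a = b ∧ P a} ≤ Nat.card {a // P a} :=
  Nat.card_le_card_of_surjective (fun a => ⟨f a, a, rfl, a.2⟩)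
    (fun ⟨_, a, hab, ha⟩ => ⟨⟨a, ha⟩, Subtype.ext hab⟩)

section Entropy

variable {τ : ℝ}

lemma two_rpow_neg_mul_binEnt (hτ0 : 0 < τ) (hτ1 : τ < 1) (x : ℝ) :
    (2 : ℝ) ^ (-(x * binEnt τ)) = τ ^ (τ * x) * (1 - τ) ^ ((1 - τ) * x) := by
  have hpow : ∀ {p : ℝ}, 0 < p → ∀ y : ℝ, p ^ y = (2 : ℝ) ^ (Real.logb 2 p * y) := fun hp y => by
    rw [Real.rpow_mul zero_le_two, Real.rpow_logb zero_lt_two one_lt_two.ne' hp]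
  rw [hpow hτ0, hpow (sub_pos.mpr hτ1), ← Real.rpow_add zero_lt_two, binEnt]
  ring_nf

lemma two_rpow_neg_mul_binEnt_le {n k : ℕ} (hτ0 : 0 < τ) (hτ : τ ≤ 1 / 2) (hk : (k : ℝ) ≤ τ * n)
    (hkn : k ≤ n) :
    (2 : ℝ) ^ (-(n * binEnt τ)) ≤ τ ^ k * (1 - τ) ^ (n - k) := by
  have hq : 0 < 1 - τ := by linarith
  have hratio : ∀ x : ℝ, τ ^ x * (1 - τ) ^ (n - x) = (1 - τ) ^ (n : ℝ) * (τ / (1 - τ)) ^ x := by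
    intro x
    rw [Real.div_rpow hτ0.le hq.le, Real.rpow_sub hq]
    ring
  calc (2 : ℝ) ^ (-(n * binEnt τ))
      = τ ^ (τ * n) * (1 - τ) ^ (n - τ * n) := by
        rw [two_rpow_neg_mul_binEnt hτ0 (by linarith)]
        ring_nf
    _ ≤ τ ^ (k : ℝ) * (1 - τ) ^ ((n : ℝ) - k) := by
        rw [hratio, hratio]
        gcongr ?_ * ?_
        exact Real.rpow_le_rpow_of_exponent_ge (by positivity)
          ((div_le_one hq).mpr (by linarith)) hk
    _ = τ ^ k * (1 - τ) ^ (n - k) := by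
        rw [← Nat.cast_sub hkn, Real.rpow_natCast, Real.rpow_natCast]

lemma sum_choose_le_two_rpow_mul_binEnt {n t : ℕ} (hτ0 : 0 ≤ τ) (hτ : τ ≤ 1 / 2)
    (ht : (t : ℝ) ≤ τ * n) :
    ∑ k ∈ range (t + 1), (n.choose k : ℝ) ≤ 2 ^ (n * binEnt τ) := by
  rcases hτ0.eq_or_lt with rfl | hτ0
  · simp only [zero_mul, Nat.cast_nonpos] at ht
    simp [ht, binEnt]
  have htn : t ≤ n := by
    have : (t : ℝ) ≤ n := by nlinarith [(n.cast_nonneg : (0 : ℝ) ≤ n)]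
    exact_mod_cast this
  have hmass : ∑ k ∈ range (t + 1), (n.choose k : ℝ) * 2 ^ (-(n * binEnt τ)) ≤ 1 :=
    calc ∑ k ∈ range (t + 1), (n.choose k : ℝ) * 2 ^ (-(n * binEnt τ))
        ≤ ∑ k ∈ range (t + 1), τ ^ k * (1 - τ) ^ (n - k) * n.choose k := by
          refine sum_le_sum fun k hk => ?_
          have hkt := mem_range_succ_iff.mp hk
          rw [mul_comm]
          gcongr
          exact two_rpow_neg_mul_binEnt_le hτ0 hτ
            ((Nat.cast_le.mpr hkt).trans ht) (hkt.trans htn)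
      _ ≤ ∑ k ∈ range (n + 1), τ ^ k * (1 - τ) ^ (n - k) * n.choose k := by
          refine sum_le_sum_of_subset_of_nonneg (range_subset_range.mpr (by omega)) ?_
          intro k _ _
          have : 0 ≤ 1 - τ := by linarith
          positivity
      _ = 1 := by rw [← add_pow, add_sub_cancel, one_pow]
  rwa [← sum_mul, ← le_div_iff₀ (by positivity), Real.rpow_neg zero_le_two, div_inv_eq_mul,
    one_mul] at hmass

end Entropy

section HammingBall

variable (ι : Type*) [Fintype ι] [DecidableEq ι]

lemma card_hammingNorm_eq_choose (k : ℕ) :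
    #{w : ι → ZMod 2 | hammingNorm w = k} = (Fintype.card ι).choose k := by
  rw [← card_univ, ← card_powersetCard]
  refine card_bij' (fun w _ => ({i | w i ≠ 0} : Finset ι)) (fun s _ i => if i ∈ s then 1 else 0)
    ?_ ?_ ?_ ?_
  · intro w hw
    simpa [mem_powersetCard, hammingNorm] using hw
  · intro s hs
    simp only [mem_powersetCard] at hs
    simp [hammingNorm, ← hs.2]
  · intro w _
    funext i
    have : ∀ x : ZMod 2, x ≠ 0 → x = 1 := by decide
    by_cases h : w i = 0 <;> simp [h, this]
  · intro s _
    ext i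
    by_cases h : i ∈ s <;> simp [h]

lemma card_hammingNorm_le_eq_sum_choose (t : ℕ) :
    #{w : ι → ZMod 2 | hammingNorm w ≤ t} = ∑ k ∈ range (t + 1), (Fintype.card ι).choose k := by
  rw [card_eq_sum_card_fiberwise (f := hammingNorm) (t := range (t + 1))]
  · refine sum_congr rfl fun k hk => ?_
    rw [← card_hammingNorm_eq_choose]
    congr 1
    ext w
    simp only [mem_filter, mem_univ, true_and, and_iff_right_iff_imp]
    rintro rfl
    exact mem_range_succ_iff.mp hk
  · intro w hw
    simpa [Nat.lt_succ_iff] using hw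

lemma card_hammingNorm_le_two_rpow_mul_binEnt {τ : ℝ} (hτ0 : 0 ≤ τ) (hτ : τ ≤ 1 / 2) :
    (Nat.card {w : ι → ZMod 2 // (hammingNorm w : ℝ) ≤ τ * Fintype.card ι} : ℝ)
      ≤ 2 ^ (Fintype.card ι * binEnt τ) := by
  have hfloor : ∀ w : ι → ZMod 2,
      (hammingNorm w : ℝ) ≤ τ * Fintype.card ι ↔ hammingNorm w ≤ ⌊τ * Fintype.card ι⌋₊ :=
    fun w => (Nat.le_floor_iff (by positivity)).symm
  simp_rw [hfloor, Nat.card_eq_fintype_card, Fintype.card_subtype,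
    card_hammingNorm_le_eq_sum_choose, Nat.cast_sum]
  exact sum_choose_le_two_rpow_mul_binEnt hτ0 hτ (Nat.floor_le (by positivity))

end HammingBall

theorem stmt_2_general (n m : ℕ) (H : Matrix (Fin m) (Fin n) (ZMod 2))
    (τ : ℝ) (hτ0 : 0 ≤ τ) (hτ : τ < 1 / 2) :
    unifProb (Fin m → ZMod 2)
        (fun s => ∃ w : Fin n → ZMod 2, H.mulVec w = s ∧ (hammingNorm w : ℝ) ≤ τ * n)
      ≤ (2 : ℝ) ^ (-((m : ℝ) - n * binEnt τ)) := by
  rw [unifProb, Fintype.card_fun, ZMod.card, Fintype.card_fin, Real.rpow_neg zero_le_two,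
    Real.rpow_sub zero_lt_two, inv_div, Real.rpow_natCast, Nat.cast_pow, Nat.cast_ofNat]
  gcongr
  refine (Nat.cast_le.mpr (card_exists_apply_eq_and_le _ _)).trans ?_
  simpa using card_hammingNorm_le_two_rpow_mul_binEnt (Fin n) hτ0 hτ.le

/-- false-acceptance-rate bound.  If `H` has full row rank `m`,
`0 ≤ τ < 1/2`, and `S` is uniform on `(ZMod 2)^m`, then the probability that the coset
with syndrome `S` contains a word of Hamming weight at most `τn` is bounded by
`2^{-(m - n·h_b(τ))}`. -/
theorem stmt_2 (n m : ℕ) (H : Matrix (Fin m) (Fin n) (ZMod 2))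
    (hH : LinearIndependent (ZMod 2) (fun i => H i))
    (τ : ℝ) (hτ0 : 0 ≤ τ) (hτ : τ < 1 / 2) :
    unifProb (Fin m → ZMod 2)
        (fun s => ∃ w : Fin n → ZMod 2, H.mulVec w = s ∧ (hammingNorm w : ℝ) ≤ τ * n)
      ≤ (2 : ℝ) ^ (-((m : ℝ) - n * binEnt τ)) :=
  stmt_2_general n m H τ hτ0 hτ
end

section
/- Consider any two-factor biometric system on a finite probability space: random variables B (probe), K (key), S (stored data) taking values in finite sets, and a decision function g with g(d,l,s) ∈ {0,1}. Define the false rejection rate P_FR := Pr[g(B,K,S) = 0] and the set of attackable stored values S_a := { s : ∃ d, l with g(d,l,s) = 1 }. Then Pr[S ∈ S_a] ≥ 1 − P_FR; consequently the successful attack rate of an adversary who observes S satisfies P_SA(S) ≥ 1 − P_FR. Moreover, if S_a contains every possible value of S, then P_SA(S) = 1. -/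
/-! The genuine user's probe and key witness that the stored value is attackable whenever
they are accepted, so `Pr[S ∈ S_a] ≥ Pr[g(B,K,S) = 1] = 1 - P_FR`. An adversary who sees `S`
and plays an accepted pair whenever one exists wins on all of `S ∈ S_a`. -/

open Classical in
/-- Probability of the event `P` under the probability mass function `μ` on the finite
sample space `Ω`. -/
noncomputable def prMass {Ω : Type*} [Fintype Ω] (μ : Ω → ℝ) (P : Ω → Prop) : ℝ :=
  ∑ ω : Ω, if P ω then μ ω else 0

section prMass

variable {Ω : Type*} [Fintype Ω] (μ : Ω → ℝ)

lemma prMass_mono (hμ0 : ∀ ω, 0 ≤ μ ω) {P Q : Ω → Prop} (h : ∀ ω, P ω → Q ω) :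
    prMass μ P ≤ prMass μ Q :=
  Finset.sum_le_sum fun ω _ => by
    by_cases hP : P ω
    · simp [hP, h ω hP]
    · by_cases hQ : Q ω <;> simp [hP, hQ, hμ0 ω]

lemma prMass_not (hμ1 : ∑ ω : Ω, μ ω = 1) (P : Ω → Prop) :
    prMass μ (fun ω => ¬ P ω) = 1 - prMass μ P := by
  unfold prMass
  rw [← hμ1, ← Finset.sum_sub_distrib]
  exact Finset.sum_congr rfl fun ω _ => by by_cases hP : P ω <;> simp [hP]

lemma prMass_eq_one_of_forall (hμ1 : ∑ ω : Ω, μ ω = 1) {P : Ω → Prop} (h : ∀ ω, P ω) :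
    prMass μ P = 1 := by
  unfold prMass
  rw [← hμ1]
  exact Finset.sum_congr rfl fun ω _ => if_pos (h ω)

end prMass

section attack

variable {D L S : Type*} [Nonempty (D × L)] (g : D → L → S → Bool)

noncomputable def acceptedAttack (s : S) : D × L :=
  Classical.epsilon fun p : D × L => g p.1 p.2 s = true

lemma acceptedAttack_spec {s : S} (hs : ∃ d l, g d l s = true) :
    g (acceptedAttack g s).1 (acceptedAttack g s).2 s = true :=
  let ⟨d, l, h⟩ := hs
  Classical.epsilon_spec (p := fun p : D × L => g p.1 p.2 s = true) ⟨(d, l), h⟩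

end attack

theorem stmt_6_general {Ω D L S : Type*} [Fintype Ω]
    (μ : Ω → ℝ) (hμ0 : ∀ ω, 0 ≤ μ ω) (hμ1 : ∑ ω : Ω, μ ω = 1)
    (B : Ω → D) (K : Ω → L) (St : Ω → S)
    (g : D → L → S → Bool) :
    (prMass μ (fun ω => ∃ d l, g d l (St ω) = true)
        ≥ 1 - prMass μ (fun ω => g (B ω) (K ω) (St ω) = false))
    ∧ (∃ att : S → D × L,
        prMass μ (fun ω => g (att (St ω)).1 (att (St ω)).2 (St ω) = true)
          ≥ 1 - prMass μ (fun ω => g (B ω) (K ω) (St ω) = false))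
    ∧ ((∀ s : S, ∃ d l, g d l s = true) →
        ∃ att : S → D × L,
          prMass μ (fun ω => g (att (St ω)).1 (att (St ω)).2 (St ω) = true) = 1) := by
  obtain ⟨ω₀, -⟩ := Finset.nonempty_of_sum_ne_zero (hμ1 ▸ one_ne_zero : ∑ ω : Ω, μ ω ≠ 0)
  have : Nonempty (D × L) := ⟨(B ω₀, K ω₀)⟩
  have hFR : 1 - prMass μ (fun ω => g (B ω) (K ω) (St ω) = false)
      = prMass μ (fun ω => g (B ω) (K ω) (St ω) = true) := by
    simp only [← Bool.not_eq_true, prMass_not μ hμ1, sub_sub_cancel]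
  have hSa : prMass μ (fun ω => ∃ d l, g d l (St ω) = true)
      ≥ 1 - prMass μ (fun ω => g (B ω) (K ω) (St ω) = false) :=
    hFR ▸ prMass_mono μ hμ0 fun ω h => ⟨B ω, K ω, h⟩
  refine ⟨hSa, ⟨acceptedAttack g, hSa.trans ?_⟩, fun hall => ⟨acceptedAttack g, ?_⟩⟩
  · exact prMass_mono μ hμ0 fun ω => acceptedAttack_spec g
  · exact prMass_eq_one_of_forall μ hμ1 fun ω => acceptedAttack_spec g (hall (St ω))

/-- Theorem 2 of the paper.  For any two-factor biometric system on a finite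
probability space, with probe `B`, key `K`, stored data `S` and decision function `g`,
letting `P_FR = Pr[g(B,K,S) = 0]` and `S_a = {s : ∃ d l, g(d,l,s) = 1}`:
`Pr[S ∈ S_a] ≥ 1 - P_FR`; consequently some attack strategy (a function of the observed
value of `S`) succeeds with probability at least `1 - P_FR`, i.e. `P_SA(S) ≥ 1 - P_FR`.
Moreover, if every value of `S` lies in `S_a`, then some attack strategy succeeds with
probability one, i.e. `P_SA(S) = 1`. -/
theorem stmt_6 {Ω D L S : Type*} [Fintype Ω] [Nonempty D] [Nonempty L]
    (μ : Ω → ℝ) (hμ0 : ∀ ω, 0 ≤ μ ω) (hμ1 : ∑ ω : Ω, μ ω = 1)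
    (B : Ω → D) (K : Ω → L) (St : Ω → S)
    (g : D → L → S → Bool) :
    (prMass μ (fun ω => ∃ d l, g d l (St ω) = true)
        ≥ 1 - prMass μ (fun ω => g (B ω) (K ω) (St ω) = false))
    ∧ (∃ att : S → D × L,
        prMass μ (fun ω => g (att (St ω)).1 (att (St ω)).2 (St ω) = true)
          ≥ 1 - prMass μ (fun ω => g (B ω) (K ω) (St ω) = false))
    ∧ ((∀ s : S, ∃ d l, g d l s = true) →
        ∃ att : S → D × L,
          prMass μ (fun ω => g (att (St ω)).1 (att (St ω)).2 (St ω) = true) = 1) :=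
  stmt_6_general μ hμ0 hμ1 B K St g
end

section
/- Consider the two-factor secure sketch system with A uniform on (ZMod 2)^n, K uniform on (ZMod 2)^m, A and K independent, H an m × n binary matrix of full row rank, and S = HA ⊕ K. Let (C,J) be an arbitrary random attack pair with values in (ZMod 2)^n × (ZMod 2)^m. If (C,J) is independent of K (but may depend on A), or if (C,J) is independent of A (but may depend on K), then the decoding syndrome HC ⊕ J ⊕ S = H(A ⊕ C) ⊕ (K ⊕ J) is uniformly distributed on (ZMod 2)^m. Consequently an adversary knowing only A, or only K, gains no advantage: P_SA(A) = P_SA(K) = P_FA. -/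
/-!
The syndrome is `H *ᵥ A + K + (H *ᵥ C + J)`. Adding to a uniform vector anything independent
of it gives a uniform vector, so it suffices that one of the summands `K` or `H *ᵥ A` is uniform
and independent of the rest. For `K` this is the hypothesis; for `H *ᵥ A` it follows because a
surjective additive map (here `H *ᵥ ·`, surjective since `H` has full row rank) pushes the uniform
distribution forward to the uniform one, all of its fibres being cosets of the kernel.
A deterministic decision on a uniform syndrome then accepts with its uniform probability.
-/

open Finset Matrix

section

variable {Ω : Type*} [Fintype Ω] (μ : Ω → ℝ)

def UniformUnder {α : Type*} [Fintype α] (X : Ω → α) : Prop :=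
  ∀ x, prMass μ (fun ω => X ω = x) = 1 / Fintype.card α

def IndepUnder {α β : Type*} (X : Ω → α) (Y : Ω → β) : Prop :=
  ∀ x y, prMass μ (fun ω => X ω = x ∧ Y ω = y)
    = prMass μ (fun ω => X ω = x) * prMass μ (fun ω => Y ω = y)

lemma prMass_congr {P Q : Ω → Prop} (h : ∀ ω, P ω ↔ Q ω) : prMass μ P = prMass μ Q := by
  rw [funext fun ω => propext (h ω)]

lemma prMass_eq_zero {P : Ω → Prop} (h : ∀ ω, ¬ P ω) : prMass μ P = 0 := by
  simp [prMass, h]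

lemma prMass_eq_sum_and {α : Type*} [Fintype α] (X : Ω → α) (P : Ω → Prop) :
    prMass μ P = ∑ a, prMass μ (fun ω => P ω ∧ X ω = a) := by
  classical
  unfold prMass
  rw [sum_comm]
  refine sum_congr rfl fun ω _ => ?_
  by_cases hP : P ω <;> simp [hP]

lemma sum_prMass_eq_one (hμ1 : ∑ ω, μ ω = 1) {α : Type*} [Fintype α] (X : Ω → α) :
    ∑ a, prMass μ (fun ω => X ω = a) = 1 := by
  calc ∑ a, prMass μ (fun ω => X ω = a)
      = prMass μ (fun _ => True) := by
        simp only [prMass_eq_sum_and μ X (fun _ => True), true_and]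
    _ = 1 := by simpa [prMass] using hμ1

lemma prMass_comp_eq_and {α β : Type*} [Fintype α] [DecidableEq β] (X : Ω → α) (f : α → β)
    (b : β) (P : Ω → Prop) :
    prMass μ (fun ω => f (X ω) = b ∧ P ω)
      = ∑ a with f a = b, prMass μ (fun ω => X ω = a ∧ P ω) := by
  rw [prMass_eq_sum_and μ X, sum_filter]
  refine sum_congr rfl fun a _ => ?_
  split_ifs with hab
  · exact prMass_congr μ fun ω =>
      ⟨fun ⟨⟨_, hP⟩, hX⟩ => ⟨hX, hP⟩, fun ⟨hX, hP⟩ => ⟨⟨hX ▸ hab, hP⟩, hX⟩⟩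
  · exact prMass_eq_zero μ fun ω ⟨⟨hb, _⟩, hX⟩ => hab (hX ▸ hb)

lemma prMass_comp_eq {α β : Type*} [Fintype α] [DecidableEq β] (X : Ω → α) (f : α → β) (b : β) :
    prMass μ (fun ω => f (X ω) = b) = ∑ a with f a = b, prMass μ (fun ω => X ω = a) := by
  simpa only [and_true] using prMass_comp_eq_and μ X f b (fun _ => True)

lemma IndepUnder.comp_left {α β γ : Type*} [Fintype α] {X : Ω → α} {Y : Ω → γ}
    (h : IndepUnder μ X Y) (f : α → β) : IndepUnder μ (fun ω => f (X ω)) Y := by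
  classical
  intro b y
  rw [prMass_comp_eq_and, prMass_comp_eq, sum_mul]
  exact sum_congr rfl fun a _ => h a y

lemma AddMonoidHom.card_mul_card_fiber {G G' : Type*} [AddGroup G] [Fintype G] [AddGroup G']
    [Fintype G'] [DecidableEq G'] (φ : G →+ G') (hφ : Function.Surjective φ) (y : G') :
    Fintype.card G' * #{g | φ g = y} = Fintype.card G := by
  symm
  rw [← card_univ, card_eq_sum_card_fiberwise (f := φ) (t := univ) (by simp),
    sum_congr rfl fun w _ => AddMonoidHom.card_fiber_eq_of_mem_range φ (hφ w) (hφ y)]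
  simp

lemma UniformUnder.map_of_surjective {G G' : Type*} [AddGroup G] [Fintype G] [AddGroup G']
    [Fintype G'] {X : Ω → G} (hX : UniformUnder μ X) (φ : G →+ G') (hφ : Function.Surjective φ) :
    UniformUnder μ (fun ω => φ (X ω)) := by
  classical
  intro y
  have hcard := φ.card_mul_card_fiber hφ y
  rw [prMass_comp_eq, sum_congr rfl fun a _ => hX a, sum_const, nsmul_eq_mul,
    mul_one_div, div_eq_div_iff (by positivity) (by positivity), one_mul]
  exact_mod_cast (mul_comm _ _).trans hcard

lemma UniformUnder.add_of_indepUnder (hμ1 : ∑ ω, μ ω = 1) {G β : Type*} [AddGroup G]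
    [Fintype G] [Fintype β] {U : Ω → G} {T : Ω → β} (hU : UniformUnder μ U) (hUT : IndepUnder μ U T)
    (g : β → G) : UniformUnder μ (fun ω => U ω + g (T ω)) := by
  intro q
  have hfiber : ∀ t, prMass μ (fun ω => U ω + g (T ω) = q ∧ T ω = t)
      = 1 / Fintype.card G * prMass μ (fun ω => T ω = t) := fun t => by
    rw [← hU (q - g t), ← hUT]
    exact prMass_congr μ fun ω => ⟨fun ⟨h, hT⟩ => ⟨by rw [← h, hT, add_sub_cancel_right], hT⟩,
      fun ⟨h, hT⟩ => ⟨by rw [h, hT, sub_add_cancel], hT⟩⟩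
  rw [prMass_eq_sum_and μ T, sum_congr rfl fun t _ => hfiber t, ← mul_sum,
    sum_prMass_eq_one μ hμ1, mul_one]

lemma UniformUnder.prMass_eq_unifProb {α : Type*} [Fintype α] {S : Ω → α}
    (hS : UniformUnder μ S) (P : α → Prop) : prMass μ (fun ω => P (S ω)) = unifProb α P := by
  classical
  have hfiber : ∀ q, prMass μ (fun ω => P (S ω) ∧ S ω = q)
      = if P q then (1 / Fintype.card α : ℝ) else 0 := fun q => by
    split_ifs with hq
    · rw [← hS q]
      exact prMass_congr μ fun ω => ⟨And.right, fun h => ⟨h ▸ hq, h⟩⟩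
    · exact prMass_eq_zero μ fun ω ⟨hP, h⟩ => hq (h ▸ hP)
  rw [prMass_eq_sum_and μ S, sum_congr rfl fun q _ => hfiber q, sum_ite, sum_const_zero,
    add_zero, sum_const, nsmul_eq_mul, mul_one_div, unifProb, Nat.card_eq_fintype_card,
    Fintype.card_subtype]

lemma Matrix.mulVec_surjective_of_linearIndependent {m n K : Type*} [Fintype m] [Fintype n]
    [Field K] {H : Matrix m n K} (hH : LinearIndependent K H.row) :
    Function.Surjective H.mulVec := by
  have hrange : LinearMap.range H.mulVecLin = ⊤ :=
    Submodule.eq_top_of_finrank_eq (by rw [← Matrix.rank, hH.rank_matrix]; simp)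
  exact LinearMap.range_eq_top.mp hrange

lemma uniformUnder_binaryVec_iff {k : ℕ} (X : Ω → Fin k → ZMod 2) :
    UniformUnder μ X ↔ ∀ x, prMass μ (fun ω => X ω = x) = 1 / 2 ^ k := by
  simp [UniformUnder]

end

theorem stmt_13_general {Ω : Type*} [Fintype Ω] (n m : ℕ)
    (μ : Ω → ℝ) (hμ1 : ∑ ω : Ω, μ ω = 1)
    (A C : Ω → Fin n → ZMod 2) (K J : Ω → Fin m → ZMod 2)
    (hA : ∀ a, prMass μ (fun ω => A ω = a) = 1 / 2 ^ n)
    (hK : ∀ x, prMass μ (fun ω => K ω = x) = 1 / 2 ^ m)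
    (H : Matrix (Fin m) (Fin n) (ZMod 2))
    (hH : LinearIndependent (ZMod 2) (fun i => H i)) :
    (∀ ω, H.mulVec (C ω) + J ω + (H.mulVec (A ω) + K ω)
        = H.mulVec (A ω + C ω) + (K ω + J ω))
    ∧ ((∀ x a c j, prMass μ (fun ω => K ω = x ∧ A ω = a ∧ C ω = c ∧ J ω = j)
          = prMass μ (fun ω => K ω = x)
            * prMass μ (fun ω => A ω = a ∧ C ω = c ∧ J ω = j)) →
        (∀ q, prMass μ
            (fun ω => H.mulVec (C ω) + J ω + (H.mulVec (A ω) + K ω) = q) = 1 / 2 ^ m)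
        ∧ ∀ dec : (Fin m → ZMod 2) → Bool,
            prMass μ (fun ω =>
                dec (H.mulVec (C ω) + J ω + (H.mulVec (A ω) + K ω)) = true)
              = unifProb (Fin m → ZMod 2) (fun q => dec q = true))
    ∧ ((∀ a x c j, prMass μ (fun ω => A ω = a ∧ K ω = x ∧ C ω = c ∧ J ω = j)
          = prMass μ (fun ω => A ω = a)
            * prMass μ (fun ω => K ω = x ∧ C ω = c ∧ J ω = j)) →
        (∀ q, prMass μ
            (fun ω => H.mulVec (C ω) + J ω + (H.mulVec (A ω) + K ω) = q) = 1 / 2 ^ m)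
        ∧ ∀ dec : (Fin m → ZMod 2) → Bool,
            prMass μ (fun ω =>
                dec (H.mulVec (C ω) + J ω + (H.mulVec (A ω) + K ω)) = true)
              = unifProb (Fin m → ZMod 2) (fun q => dec q = true)) := by
  have hAu : UniformUnder μ A := (uniformUnder_binaryVec_iff μ A).2 hA
  have hKu : UniformUnder μ K := (uniformUnder_binaryVec_iff μ K).2 hK
  have hHAu : UniformUnder μ (fun ω => H *ᵥ A ω) :=
    hAu.map_of_surjective μ H.mulVecLin.toAddMonoidHom
      (Matrix.mulVec_surjective_of_linearIndependent hH)
  have accept_of_uniform : ∀ S : Ω → Fin m → ZMod 2, UniformUnder μ S →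
      (∀ q, prMass μ (fun ω => S ω = q) = 1 / 2 ^ m) ∧
        ∀ dec : (Fin m → ZMod 2) → Bool, prMass μ (fun ω => dec (S ω) = true)
          = unifProb (Fin m → ZMod 2) (fun q => dec q = true) :=
    fun S hS => ⟨(uniformUnder_binaryVec_iff μ S).1 hS,
      fun dec => hS.prMass_eq_unifProb μ (fun q => dec q = true)⟩
  refine ⟨fun ω => by rw [mulVec_add]; abel, fun hindK => accept_of_uniform _ ?_,
    fun hindA => accept_of_uniform _ ?_⟩
  · have hKT : IndepUnder μ K (fun ω => (A ω, C ω, J ω)) := by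
      rintro x ⟨a, c, j⟩
      simpa only [Prod.mk.injEq] using hindK x a c j
    convert hKu.add_of_indepUnder μ hμ1 hKT (fun t => H *ᵥ t.2.1 + t.2.2 + H *ᵥ t.1) using 2
    abel
  · have hAT : IndepUnder μ A (fun ω => (K ω, C ω, J ω)) := by
      rintro a ⟨x, c, j⟩
      simpa only [Prod.mk.injEq] using hindA a x c j
    convert hHAu.add_of_indepUnder μ hμ1 (hAT.comp_left μ (H *ᵥ ·))
      (fun t => H *ᵥ t.2.1 + t.2.2 + t.1) using 2
    abel

/-- In the two-factor secure sketch system (`A` uniform on `(ZMod 2)^n`,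
`K` uniform on `(ZMod 2)^m`, `A ⊥ K`, `H` full row rank, `S = HA ⊕ K`), let `(C,J)` be an
arbitrary random attack pair.  The decoding syndrome satisfies
`HC ⊕ J ⊕ S = H(A ⊕ C) ⊕ (K ⊕ J)`.  If the attack is generated knowing only `A`
(i.e. `K` is independent of `(A,C,J)`), or knowing only `K` (i.e. `A` is independent of
`(K,C,J)`), then the decoding syndrome is uniform on `(ZMod 2)^m`; consequently, since the
accept decision is a deterministic function of the syndrome, the acceptance probability
equals that obtained under a uniformly distributed syndrome, i.e.
`P_SA(A) = P_SA(K) = P_FA`. -/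
theorem stmt_13 {Ω : Type*} [Fintype Ω] (n m : ℕ)
    (μ : Ω → ℝ) (hμ0 : ∀ ω, 0 ≤ μ ω) (hμ1 : ∑ ω : Ω, μ ω = 1)
    (A C : Ω → Fin n → ZMod 2) (K J : Ω → Fin m → ZMod 2)
    (hA : ∀ a, prMass μ (fun ω => A ω = a) = 1 / 2 ^ n)
    (hK : ∀ x, prMass μ (fun ω => K ω = x) = 1 / 2 ^ m)
    (hAK : ∀ a x, prMass μ (fun ω => A ω = a ∧ K ω = x)
      = prMass μ (fun ω => A ω = a) * prMass μ (fun ω => K ω = x))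
    (H : Matrix (Fin m) (Fin n) (ZMod 2))
    (hH : LinearIndependent (ZMod 2) (fun i => H i)) :
    (∀ ω, H.mulVec (C ω) + J ω + (H.mulVec (A ω) + K ω)
        = H.mulVec (A ω + C ω) + (K ω + J ω))
    ∧ ((∀ x a c j, prMass μ (fun ω => K ω = x ∧ A ω = a ∧ C ω = c ∧ J ω = j)
          = prMass μ (fun ω => K ω = x)
            * prMass μ (fun ω => A ω = a ∧ C ω = c ∧ J ω = j)) →
        (∀ q, prMass μ
            (fun ω => H.mulVec (C ω) + J ω + (H.mulVec (A ω) + K ω) = q) = 1 / 2 ^ m)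
        ∧ ∀ dec : (Fin m → ZMod 2) → Bool,
            prMass μ (fun ω =>
                dec (H.mulVec (C ω) + J ω + (H.mulVec (A ω) + K ω)) = true)
              = unifProb (Fin m → ZMod 2) (fun q => dec q = true))
    ∧ ((∀ a x c j, prMass μ (fun ω => A ω = a ∧ K ω = x ∧ C ω = c ∧ J ω = j)
          = prMass μ (fun ω => A ω = a)
            * prMass μ (fun ω => K ω = x ∧ C ω = c ∧ J ω = j)) →
        (∀ q, prMass μ
            (fun ω => H.mulVec (C ω) + J ω + (H.mulVec (A ω) + K ω) = q) = 1 / 2 ^ m)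
        ∧ ∀ dec : (Fin m → ZMod 2) → Bool,
            prMass μ (fun ω =>
                dec (H.mulVec (C ω) + J ω + (H.mulVec (A ω) + K ω)) = true)
              = unifProb (Fin m → ZMod 2) (fun q => dec q = true)) :=
  stmt_13_general n m μ hμ1 A C K J hA hK H hH
end

section
/- Let A be uniform on (ZMod 2)^n, let H₁,…,H_l be binary matrices with n columns, and let H_j be an m_j × n binary matrix of full row rank. Set r := rank(H₁,…,H_l) and t := rank(H₁,…,H_l,H_j) − r (the residual rank of H_j). Then for every tuple (s₁,…,s_l) in the range of a ↦ (H₁a,…,H_la) and every s_j ∈ (ZMod 2)^{m_j}: Pr[H_jA = s_j | H₁A = s₁,…,H_lA = s_l] = 2^{-t} if (s₁,…,s_l,s_j) is in the range of a ↦ (H₁a,…,H_la,H_ja), and = 0 otherwise. In particular: (a) if t = m_j (all rows of H_j linearly independent of the rows of H₁,…,H_l), then H_jA is uniform on (ZMod 2)^{m_j} and independent of (H₁A,…,H_lA), so the compromised syndromes give no advantage in guessing H_jA; and (b) in general, an adversary who knows (H₁A,…,H_lA) can guess H_jA correctly with probability exactly 2^{-t}, so for noiseless enrollments P_SA(j,V)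 ≥ 2^{-t}. -/
open LinearMap

section UniformImage

variable {R G W : Type*} [Ring R] [AddCommGroup G] [Module R G] [AddCommGroup W] [Module R W]

theorem natCard_subtype_comp_eq (f : G →ₗ[R] W) (P : W → Prop) :
    Nat.card {a // P (f a)} = Nat.card {x : range f // P x} * Nat.card (ker f) := by
  let σ : range f → G := fun x => (mem_range.1 x.2).choose
  have hσ : ∀ x, f (σ x) = x := fun x => (mem_range.1 x.2).choose_spec
  rw [← Nat.card_prod]
  exact Nat.card_congr
    { toFun := fun a => (⟨⟨f a, mem_range_self f a⟩, a.2⟩,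
        ⟨a - σ ⟨f a, mem_range_self f a⟩, by simp [hσ]⟩)
      invFun := fun p => ⟨σ p.1 + p.2, by simpa [hσ, mem_ker.1 p.2.2] using p.1.2⟩
      left_inv := fun a => by ext; simp
      right_inv := fun p => by ext <;> simp [hσ, mem_ker.1 p.2.2] }

variable [Fintype G]

theorem unifProb_comp_linearMap (f : G →ₗ[R] W) (P : W → Prop) :
    unifProb G (fun a => P (f a)) = Nat.card {x : range f // P x} / Nat.card (range f) := by
  have hG : Nat.card G = Nat.card (range f) * Nat.card (ker f) := by
    simpa [Nat.card_congr (Equiv.subtypeUnivEquiv fun _ => trivial)] using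
      natCard_subtype_comp_eq f fun _ => True
  have hker : (Nat.card (ker f) : ℝ) ≠ 0 := by exact_mod_cast Nat.card_pos.ne'
  rw [unifProb, natCard_subtype_comp_eq, ← Nat.card_eq_fintype_card, hG]
  push_cast
  rw [mul_div_mul_right _ _ hker]

open scoped Classical in
theorem unifProb_linearMap_eq (f : G →ₗ[R] W) (s : W) :
    unifProb G (fun a => f a = s) = if s ∈ range f then (Nat.card (range f) : ℝ)⁻¹ else 0 := by
  rw [unifProb_comp_linearMap f (· = s)]
  split_ifs with hs
  · have : Unique {x : range f // (x : W) = s} :=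
      ⟨⟨⟨⟨s, hs⟩, rfl⟩⟩, fun x => Subtype.ext (Subtype.ext x.2)⟩
    simp
  · have : IsEmpty {x : range f // (x : W) = s} := ⟨fun x => hs (x.2 ▸ x.1.2)⟩
    simp

end UniformImage

section Joint

variable {R G U W : Type*} [Ring R] [AddCommGroup G] [Module R G] [AddCommGroup U] [Module R U]
  [AddCommGroup W] [Module R W] [Fintype G] (φ : G →ₗ[R] W) (ψ : G →ₗ[R] U)

instance LinearMap.finite_range (f : G →ₗ[R] W) : Finite (range f) :=
  Finite.of_surjective _ f.surjective_rangeRestrict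

theorem unifProb_and_eq_unifProb_prod (s : W) (u : U) :
    unifProb G (fun a => ψ a = u ∧ φ a = s) = unifProb G (fun a => φ.prod ψ a = (s, u)) := by
  simp only [prod_apply, Function.prod, Prod.ext_iff, and_comm]

open scoped Classical in
theorem unifProb_and_div_unifProb {s : W} (hs : s ∈ range φ) (u : U) :
    unifProb G (fun a => ψ a = u ∧ φ a = s) / unifProb G (fun a => φ a = s)
      = if (s, u) ∈ range (φ.prod ψ) then
          (Nat.card (range φ) : ℝ) / Nat.card (range (φ.prod ψ)) else 0 := by
  rw [unifProb_and_eq_unifProb_prod, unifProb_linearMap_eq, unifProb_linearMap_eq, if_pos hs]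
  split_ifs <;> simp [div_eq_mul_inv, mul_comm]

theorem natCard_range_le_natCard_range_prod :
    Nat.card (range φ) ≤ Nat.card (range (φ.prod ψ)) := by
  refine Nat.card_le_card_of_surjective (fun x => ⟨x.1.1, ?_⟩) fun w => ?_
  · obtain ⟨a, ha⟩ := x.2
    exact ⟨a, congrArg Prod.fst ha⟩
  · obtain ⟨a, ha⟩ := w.2
    exact ⟨⟨φ.prod ψ a, mem_range_self _ a⟩, Subtype.ext ha⟩

theorem range_prod_eq_prod_top [Finite U]
    (h : Nat.card (range (φ.prod ψ)) = Nat.card (range φ) * Nat.card U) :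
    range (φ.prod ψ) = (range φ).prod ⊤ := by
  have hle : range (φ.prod ψ) ≤ (range φ).prod ⊤ := by
    rintro _ ⟨a, rfl⟩
    exact ⟨mem_range_self φ a, Submodule.mem_top⟩
  have hfin : ((range φ).prod (⊤ : Submodule R U) : Set (W × U)).Finite := by
    rw [Submodule.prod_coe, coe_range]
    exact (Set.finite_range φ).prod Set.finite_univ
  refine SetLike.coe_injective (hfin.eq_of_subset_of_card_le hle ?_)
  rw [Submodule.prod_coe, Submodule.top_coe, Nat.card_congr (Equiv.Set.prod _ _), Nat.card_prod,
    Nat.card_congr (Equiv.Set.univ U)]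
  exact h.ge

variable {φ ψ}

theorem unifProb_eq_inv_natCard_of_range_prod_eq (h : range (φ.prod ψ) = (range φ).prod ⊤)
    (u : U) : unifProb G (fun a => ψ a = u) = (Nat.card U : ℝ)⁻¹ := by
  have hψ : range ψ = ⊤ := by
    refine eq_top_iff.2 fun u _ => ?_
    obtain ⟨a, ha⟩ : ((0 : W), u) ∈ range (φ.prod ψ) := h ▸ ⟨zero_mem _, Submodule.mem_top⟩
    exact ⟨a, congrArg Prod.snd ha⟩
  rw [unifProb_linearMap_eq, hψ, if_pos Submodule.mem_top, Nat.card_congr Submodule.topEquiv.toEquiv]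

theorem unifProb_and_eq_mul_of_natCard_range_prod [Finite U]
    (h : Nat.card (range (φ.prod ψ)) = Nat.card (range φ) * Nat.card U) (s : W) (u : U) :
    unifProb G (fun a => ψ a = u ∧ φ a = s)
      = unifProb G (fun a => ψ a = u) * unifProb G (fun a => φ a = s) := by
  classical
  have hmem : (s, u) ∈ range (φ.prod ψ) ↔ s ∈ range φ := by
    rw [range_prod_eq_prod_top φ ψ h, Submodule.mem_prod]
    exact and_iff_left Submodule.mem_top
  rw [unifProb_eq_inv_natCard_of_range_prod_eq (range_prod_eq_prod_top φ ψ h),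
    unifProb_and_eq_unifProb_prod, unifProb_linearMap_eq, unifProb_linearMap_eq, hmem, h]
  split_ifs <;> simp [mul_comm]

variable (φ ψ)

theorem unifProb_guess_eq (g : W → U) :
    unifProb G (fun a => g (φ a) = ψ a)
      = Nat.card {w : range φ // ((w : W), g w) ∈ range (φ.prod ψ)}
          / Nat.card (range (φ.prod ψ)) := by
  have e : {x : range (φ.prod ψ) // g (x : W × U).1 = (x : W × U).2}
      ≃ {w : range φ // ((w : W), g w) ∈ range (φ.prod ψ)} :=
    { toFun := fun x => ⟨⟨(x : W × U).1, by
          obtain ⟨a, ha⟩ := x.1.2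
          exact ⟨a, congrArg Prod.fst ha⟩⟩, by rw [x.2, Prod.mk.eta]; exact x.1.2⟩
      invFun := fun w => ⟨⟨((w : W), g w), w.2⟩, rfl⟩
      left_inv := fun x => Subtype.ext (Subtype.ext (Prod.ext rfl x.2))
      right_inv := fun w => rfl }
  rw [← Nat.card_congr e]
  exact unifProb_comp_linearMap (φ.prod ψ) fun x => g x.1 = x.2

theorem unifProb_guess_le (g : W → U) :
    unifProb G (fun a => g (φ a) = ψ a)
      ≤ (Nat.card (range φ) : ℝ) / Nat.card (range (φ.prod ψ)) := by
  rw [unifProb_guess_eq]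
  gcongr
  exact Finite.card_subtype_le _

theorem exists_unifProb_guess_eq :
    ∃ g : W → U, unifProb G (fun a => g (φ a) = ψ a)
      = (Nat.card (range φ) : ℝ) / Nat.card (range (φ.prod ψ)) := by
  let g : W → U := fun w => ψ (Function.invFun φ w)
  refine ⟨g, (unifProb_guess_eq φ ψ g).trans ?_⟩
  congr 2
  refine Nat.card_congr (Equiv.subtypeUnivEquiv fun w => ?_)
  obtain ⟨b, hb⟩ := w.2
  refine ⟨Function.invFun φ w, Prod.ext (Function.invFun_eq ⟨b, hb⟩) rfl⟩

end Joint

theorem natCard_range_linearEquiv_comp {R G M N : Type*} [Ring R] [AddCommGroup G] [Module R G]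
    [AddCommGroup M] [Module R M] [AddCommGroup N] [Module R N] (e : M ≃ₗ[R] N) (f : G →ₗ[R] M) :
    Nat.card (range (e.toLinearMap ∘ₗ f)) = Nat.card (range f) := by
  rw [range_comp]
  exact Nat.card_congr (e.submoduleMap (range f)).toEquiv.symm

section Matrix

variable {K ι n p : Type*} [Field K] [Fintype n] {m : ι → Type*}

theorem Matrix.natCard_range_mulVecLin (A : Matrix p n K) :
    Nat.card (range A.mulVecLin) = Nat.card K ^ A.rank :=
  Module.natCard_eq_pow_finrank

theorem Matrix.natCard_range_pi_mulVecLin (H : ∀ i, Matrix (m i) n K) :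
    Nat.card (range (LinearMap.pi fun i => (H i).mulVecLin))
      = Nat.card K ^ (Matrix.of fun p j => H p.1 p.2 j : Matrix (Σ i, m i) n K).rank := by
  rw [← Matrix.natCard_range_mulVecLin,
    ← natCard_range_linearEquiv_comp (LinearEquiv.piCurry K fun i (_ : m i) => K)]
  rfl

theorem Matrix.natCard_range_pi_mulVecLin_prod (H : ∀ i, Matrix (m i) n K) (B : Matrix p n K) :
    Nat.card (range ((LinearMap.pi fun i => (H i).mulVecLin).prod B.mulVecLin))
      = Nat.card K ^ (Matrix.of (Sum.elim (fun p j => H p.1 p.2 j) fun q j => B q j) :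
          Matrix ((Σ i, m i) ⊕ p) n K).rank := by
  rw [← Matrix.natCard_range_mulVecLin, ← natCard_range_linearEquiv_comp
    ((LinearEquiv.sumArrowLequivProdArrow _ _ K K).trans
      ((LinearEquiv.piCurry K fun i (_ : m i) => K).prodCongr (LinearEquiv.refl K _)))]
  rfl

end Matrix

theorem stmt_17_general (n l mj : ℕ) (m : Fin l → ℕ)
    (H : ∀ i, Matrix (Fin (m i)) (Fin n) (ZMod 2))
    (Hj : Matrix (Fin mj) (Fin n) (ZMod 2)) :
    let stacked : Matrix ((i : Fin l) × Fin (m i)) (Fin n) (ZMod 2) :=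
      Matrix.of fun p j => H p.1 p.2 j
    let full : Matrix (((i : Fin l) × Fin (m i)) ⊕ Fin mj) (Fin n) (ZMod 2) :=
      Matrix.of (Sum.elim (fun p j => H p.1 p.2 j) (fun q j => Hj q j))
    let r : ℕ := stacked.rank
    let t : ℕ := full.rank - r
    let φ : (Fin n → ZMod 2) → ∀ i : Fin l, Fin (m i) → ZMod 2 :=
      fun a i => (H i).mulVec a
    (∀ s : ∀ i : Fin l, Fin (m i) → ZMod 2, (∃ a, φ a = s) →
      ∀ sj : Fin mj → ZMod 2,
        unifProb (Fin n → ZMod 2) (fun a => Hj.mulVec a = sj ∧ φ a = s)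
            / unifProb (Fin n → ZMod 2) (fun a => φ a = s)
          = if ∃ a, φ a = s ∧ Hj.mulVec a = sj then 1 / 2 ^ t else 0)
    ∧ (t = mj →
        (∀ sj : Fin mj → ZMod 2,
          unifProb (Fin n → ZMod 2) (fun a => Hj.mulVec a = sj) = 1 / 2 ^ mj)
        ∧ ∀ (sj : Fin mj → ZMod 2) (s : ∀ i : Fin l, Fin (m i) → ZMod 2),
            unifProb (Fin n → ZMod 2) (fun a => Hj.mulVec a = sj ∧ φ a = s)
              = unifProb (Fin n → ZMod 2) (fun a => Hj.mulVec a = sj)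
                * unifProb (Fin n → ZMod 2) (fun a => φ a = s))
    ∧ (∃ guess : (∀ i : Fin l, Fin (m i) → ZMod 2) → (Fin mj → ZMod 2),
        unifProb (Fin n → ZMod 2) (fun a => guess (φ a) = Hj.mulVec a) = 1 / 2 ^ t)
    ∧ (∀ guess : (∀ i : Fin l, Fin (m i) → ZMod 2) → (Fin mj → ZMod 2),
        unifProb (Fin n → ZMod 2) (fun a => guess (φ a) = Hj.mulVec a) ≤ 1 / 2 ^ t) := by
  classical
  intro stacked full r t φ
  let Lφ : (Fin n → ZMod 2) →ₗ[ZMod 2] ∀ i : Fin l, Fin (m i) → ZMod 2 :=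
    LinearMap.pi fun i => (H i).mulVecLin
  let Φ := Lφ.prod Hj.mulVecLin
  have hr : Nat.card (range Lφ) = 2 ^ r := by
    rw [Matrix.natCard_range_pi_mulVecLin, Nat.card_zmod]
  have hR : Nat.card (range Φ) = 2 ^ full.rank := by
    rw [Matrix.natCard_range_pi_mulVecLin_prod, Nat.card_zmod]
  have hrR : r ≤ full.rank := by
    have := natCard_range_le_natCard_range_prod Lφ Hj.mulVecLin
    rwa [hr, hR, Nat.pow_le_pow_iff_right one_lt_two] at this
  have hratio : (Nat.card (range Lφ) : ℝ) / Nat.card (range Φ) = 1 / 2 ^ t := by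
    rw [hr, hR, ← Nat.sub_add_cancel hrR]
    push_cast
    rw [pow_add, div_mul_cancel_right₀ (by positivity), one_div]
  have hmem : ∀ s sj, (s, sj) ∈ range Φ ↔ ∃ a, φ a = s ∧ Hj.mulVec a = sj := fun _ _ =>
    mem_range.trans (exists_congr fun _ => Prod.ext_iff)
  refine ⟨fun s hs sj => ?_, fun htm => ?_, ?_, fun g => ?_⟩
  · refine (unifProb_and_div_unifProb Lφ Hj.mulVecLin hs sj).trans ?_
    rw [hratio]
    exact if_congr (hmem s sj) rfl rfl
  · have hcard : Nat.card (range Φ) = Nat.card (range Lφ) * Nat.card (Fin mj → ZMod 2) := by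
      rw [hR, hr, Nat.card_fun, Nat.card_zmod, Nat.card_fin, ← pow_add]
      congr 1
      omega
    refine ⟨fun sj => ?_, fun sj s => unifProb_and_eq_mul_of_natCard_range_prod hcard s sj⟩
    refine (unifProb_eq_inv_natCard_of_range_prod_eq (range_prod_eq_prod_top _ _ hcard) sj).trans ?_
    simp
  · obtain ⟨g, hg⟩ := exists_unifProb_guess_eq Lφ Hj.mulVecLin
    exact ⟨g, hg.trans hratio⟩
  · exact (unifProb_guess_le Lφ Hj.mulVecLin g).trans_eq hratio

/-- Let `A` be uniform on `(ZMod 2)^n`, `H₁,…,H_l` binary matrices with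
`n` columns, and `H_j` of full row rank `m_j`.  With `r = rank(H₁,…,H_l)` and residual rank
`t = rank(H₁,…,H_l,H_j) − r`: for every attainable tuple `s` of compromised syndromes and
every `s_j`, `Pr[H_jA = s_j ∣ (H₁A,…,H_lA) = s]` equals `2^{-t}` if `(s,s_j)` is jointly
attainable and `0` otherwise.  In particular (a) if `t = m_j` then `H_jA` is uniform and
independent of `(H₁A,…,H_lA)`, and (b) some guessing strategy based on `(H₁A,…,H_lA)`
recovers `H_jA` with probability exactly `2^{-t}` (and no strategy does better), so for
noiseless enrollments `P_SA(j,V) ≥ 2^{-t}`. -/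
theorem stmt_17 (n l mj : ℕ) (m : Fin l → ℕ)
    (H : ∀ i, Matrix (Fin (m i)) (Fin n) (ZMod 2))
    (Hj : Matrix (Fin mj) (Fin n) (ZMod 2))
    (hHj : LinearIndependent (ZMod 2) (fun q => Hj q)) :
    let stacked : Matrix ((i : Fin l) × Fin (m i)) (Fin n) (ZMod 2) :=
      Matrix.of fun p j => H p.1 p.2 j
    let full : Matrix (((i : Fin l) × Fin (m i)) ⊕ Fin mj) (Fin n) (ZMod 2) :=
      Matrix.of (Sum.elim (fun p j => H p.1 p.2 j) (fun q j => Hj q j))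
    let r : ℕ := stacked.rank
    let t : ℕ := full.rank - r
    let φ : (Fin n → ZMod 2) → ∀ i : Fin l, Fin (m i) → ZMod 2 :=
      fun a i => (H i).mulVec a
    (∀ s : ∀ i : Fin l, Fin (m i) → ZMod 2, (∃ a, φ a = s) →
      ∀ sj : Fin mj → ZMod 2,
        unifProb (Fin n → ZMod 2) (fun a => Hj.mulVec a = sj ∧ φ a = s)
            / unifProb (Fin n → ZMod 2) (fun a => φ a = s)
          = if ∃ a, φ a = s ∧ Hj.mulVec a = sj then 1 / 2 ^ t else 0)
    ∧ (t = mj →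
        (∀ sj : Fin mj → ZMod 2,
          unifProb (Fin n → ZMod 2) (fun a => Hj.mulVec a = sj) = 1 / 2 ^ mj)
        ∧ ∀ (sj : Fin mj → ZMod 2) (s : ∀ i : Fin l, Fin (m i) → ZMod 2),
            unifProb (Fin n → ZMod 2) (fun a => Hj.mulVec a = sj ∧ φ a = s)
              = unifProb (Fin n → ZMod 2) (fun a => Hj.mulVec a = sj)
                * unifProb (Fin n → ZMod 2) (fun a => φ a = s))
    ∧ (∃ guess : (∀ i : Fin l, Fin (m i) → ZMod 2) → (Fin mj → ZMod 2),
        unifProb (Fin n → ZMod 2) (fun a => guess (φ a) = Hj.mulVec a) = 1 / 2 ^ t)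
    ∧ (∀ guess : (∀ i : Fin l, Fin (m i) → ZMod 2) → (Fin mj → ZMod 2),
        unifProb (Fin n → ZMod 2) (fun a => guess (φ a) = Hj.mulVec a) ≤ 1 / 2 ^ t) :=
  stmt_17_general n l mj m H Hj
end

section
/- Consider the multi-system two-factor secure sketch model: A₀ uniform on (ZMod 2)^n; Aᵢ = A₀ ⊕ Nᵢ with noise vectors Nᵢ; keys Kᵢ uniform on (ZMod 2)^{mᵢ}; the collection (A₀, N₁,…,N_u, K₁,…,K_u) mutually independent; and Sᵢ = HᵢAᵢ ⊕ Kᵢ with Hᵢ of full row rank. Fix a system index j. Then S_j is uniformly distributed on (ZMod 2)^{m_j} and is independent of the entire tuple (A₀, A₁,…,A_u, (Sᵢ)_{i≠j}, (Kᵢ)_{i≠j}). Consequently, if the key K_j of system j is not compromised, then no matter what subset of the biometrics and of the other systems' stored data and keys the adversary has compromised, the successful attack rate against system j equals the false acceptance rate: P_SA(j,V,𝒜) = P_FA(j). -/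
open Classical in
/-- Classical real-valued indicator of a proposition. -/
noncomputable def ind (p : Prop) : ℝ := if p then 1 else 0

lemma ind_and (p q : Prop) : ind (p ∧ q) = ind p * ind q := by
  unfold ind
  by_cases h : p <;> by_cases h' : q <;> simp [h, h']

lemma ind_true {p : Prop} (h : p) : ind p = 1 := by unfold ind; rw [if_pos h]
lemma ind_false {p : Prop} (h : ¬ p) : ind p = 0 := by unfold ind; rw [if_neg h]

lemma sum_ind_eq {α : Type*} [Fintype α] (b : α) : ∑ a : α, ind (a = b) = 1 := by
  rw [Finset.sum_eq_single b]
  · exact ind_true rfl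
  · exact fun c _ h => ind_false h
  · exact fun h => absurd (Finset.mem_univ b) h

lemma sum_ind_card {α : Type*} [Fintype α] (p : α → Prop) :
    ∑ a : α, ind (p a) = (Nat.card {a // p a} : ℝ) := by
  classical
  unfold ind
  rw [Finset.sum_boole, Nat.card_eq_fintype_card, Fintype.card_subtype]

lemma card_fun_zmod (k : ℕ) : (Fintype.card (Fin k → ZMod 2) : ℝ) = 2 ^ k := by
  simp

/-- Multi-system two-factor secure sketch model: the sample space consists
of `ω = (a, nn, kk)` with `A₀ = a` uniform on `(ZMod 2)^n`, noise `nn i` with arbitrary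
distributions `ν i`, and keys `kk i` uniform on `(ZMod 2)^{m i}`, all mutually independent;
`Aᵢ = A₀ ⊕ Nᵢ` and `Sᵢ = HᵢAᵢ ⊕ Kᵢ` with `Hᵢ` of full row rank.  Fix a system `j`.  Then
`S_j` is uniform on `(ZMod 2)^{m j}` and independent of the tuple
`T = (A₀, (Aᵢ)ᵢ, (Sᵢ)_{i≠j}, (Kᵢ)_{i≠j})`.  Consequently, for every attack `att` computed
from `T` and every (deterministic) accept decision `dec` applied to the decoding syndrome
`H_j C ⊕ J ⊕ S_j`, the acceptance probability equals that of a uniformly random syndrome,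
i.e. if the key `K_j` is not compromised then `P_SA(j,V,𝒜) = P_FA(j)`. -/
theorem stmt_18 (n u : ℕ) (m : Fin u → ℕ)
    (H : ∀ i, Matrix (Fin (m i)) (Fin n) (ZMod 2))
    (hH : ∀ i, LinearIndependent (ZMod 2) (fun r => H i r))
    (ν : Fin u → (Fin n → ZMod 2) → ℝ)
    (hν0 : ∀ i x, 0 ≤ ν i x) (hν1 : ∀ i, ∑ x, ν i x = 1)
    (j : Fin u) :
    let Ω : Type := (Fin n → ZMod 2) × (∀ _ : Fin u, Fin n → ZMod 2)
      × (∀ i : Fin u, Fin (m i) → ZMod 2)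
    let μ : Ω → ℝ := fun ω =>
      (1 / 2 ^ n) * (∏ i, ν i (ω.2.1 i)) * ∏ i, ((1 : ℝ) / 2 ^ (m i))
    let A : Ω → Fin u → Fin n → ZMod 2 := fun ω i => ω.1 + ω.2.1 i
    let S : Ω → ∀ i : Fin u, Fin (m i) → ZMod 2 :=
      fun ω i => (H i).mulVec (A ω i) + ω.2.2 i
    let TT : Type := (Fin n → ZMod 2) × (Fin u → Fin n → ZMod 2)
      × (∀ i : {i : Fin u // i ≠ j}, Fin (m i.1) → ZMod 2)
      × (∀ i : {i : Fin u // i ≠ j}, Fin (m i.1) → ZMod 2)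
    let T : Ω → TT :=
      fun ω => (ω.1, A ω, fun i => S ω i.1, fun i => ω.2.2 i.1)
    (∀ sj : Fin (m j) → ZMod 2, prMass μ (fun ω => S ω j = sj) = 1 / 2 ^ (m j))
    ∧ (∀ (sj : Fin (m j) → ZMod 2) (tv : TT),
        prMass μ (fun ω => S ω j = sj ∧ T ω = tv)
          = prMass μ (fun ω => S ω j = sj) * prMass μ (fun ω => T ω = tv))
    ∧ ∀ (att : TT → (Fin n → ZMod 2) × (Fin (m j) → ZMod 2))
        (dec : (Fin (m j) → ZMod 2) → Bool),
        prMass μ (fun ω =>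
            dec ((H j).mulVec (att (T ω)).1 + (att (T ω)).2 + S ω j) = true)
          = unifProb (Fin (m j) → ZMod 2) (fun q => dec q = true) := by
  intro Ω μ A S TT T
  classical
  set e : (Fin (m j) → ZMod 2) × (∀ i : {i : Fin u // i ≠ j}, Fin (m i.1) → ZMod 2)
      ≃ (∀ i : Fin u, Fin (m i) → ZMod 2) :=
    (Equiv.piSplitAt j (fun i => Fin (m i) → ZMod 2)).symm with he
  -- prMass as a weighted sum of indicators
  have hprM : ∀ P : Ω → Prop, prMass μ P = ∑ ω : Ω, μ ω * ind (P ω) := by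
    intro P
    unfold prMass ind
    refine Finset.sum_congr rfl fun ω _ => ?_
    by_cases h : P ω <;> simp [h]
  -- splitting sums over Ω into iterated sums
  have hsum : ∀ f : Ω → ℝ, ∑ ω : Ω, f ω
      = ∑ a : Fin n → ZMod 2, ∑ nn : ∀ _ : Fin u, Fin n → ZMod 2,
          ∑ kk : ∀ i : Fin u, Fin (m i) → ZMod 2, f (a, nn, kk) := by
    intro f
    exact (Fintype.sum_prod_type (f := f)).trans
      (Finset.sum_congr rfl fun a _ => Fintype.sum_prod_type (f := fun p => f (a, p)))
  -- splitting sums over keys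
  have hsplit : ∀ F : (∀ i : Fin u, Fin (m i) → ZMod 2) → ℝ,
      ∑ kk, F kk = ∑ x : Fin (m j) → ZMod 2,
        ∑ rest : ∀ i : {i : Fin u // i ≠ j}, Fin (m i.1) → ZMod 2, F (e (x, rest)) := by
    intro F
    rw [← Equiv.sum_comp e F, Fintype.sum_prod_type]
  have hej : ∀ x rest, e (x, rest) j = x := by
    intro x rest; simp [he]
  have hene : ∀ x rest (i : {i : Fin u // i ≠ j}), e (x, rest) i.1 = rest i := by
    intro x rest i; simp [he, i.2]
  -- total mass is 1
  have hnn : ∑ nn : (∀ _ : Fin u, Fin n → ZMod 2), ∏ i, ν i (nn i) = 1 := by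
    rw [← Fintype.piFinset_univ, ← Finset.prod_univ_sum]
    simp [hν1]
  have hkk : ∑ kk : (∀ i : Fin u, Fin (m i) → ZMod 2), ∏ i, ((1:ℝ)/2^(m i)) = 1 := by
    rw [Finset.sum_const, Finset.card_univ, nsmul_eq_mul]
    have hc : (Fintype.card (∀ i : Fin u, Fin (m i) → ZMod 2) : ℝ) = ∏ i, (2:ℝ)^(m i) := by
      simp [Fintype.card_pi]
    rw [hc, ← Finset.prod_mul_distrib]
    refine Finset.prod_eq_one fun i _ => ?_
    rw [mul_one_div, div_self (by positivity)]
  have htot : ∑ ω : Ω, μ ω = 1 := by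
    rw [hsum μ]
    have h1 : ∀ (a : Fin n → ZMod 2) (nn : ∀ _ : Fin u, Fin n → ZMod 2),
        ∑ kk : ∀ i : Fin u, Fin (m i) → ZMod 2, μ (a, nn, kk)
        = ((1:ℝ)/2^n) * ∏ i, ν i (nn i) := by
      intro a nn
      simp only [μ]
      rw [← Finset.mul_sum, hkk, mul_one]
    have h2 :
        ∑ nn : ∀ _ : Fin u, Fin n → ZMod 2, ((1:ℝ)/2^n) * ∏ i, ν i (nn i) = (1:ℝ)/2^n := by
      rw [← Finset.mul_sum, hnn, mul_one]
    simp only [h1]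
    rw [h2]
    rw [Finset.sum_const, Finset.card_univ, nsmul_eq_mul, card_fun_zmod, mul_one_div,
      div_self (by positivity)]
  -- the master lemma
  have master : ∀ ψ : TT → (Fin (m j) → ZMod 2) → ℝ,
      ∑ ω : Ω, μ ω * ψ (T ω) (S ω j)
        = ∑ ω : Ω, μ ω * ((1/2^(m j)) * ∑ q, ψ (T ω) q) := by
    intro ψ
    rw [hsum (fun ω => μ ω * ψ (T ω) (S ω j)),
        hsum (fun ω => μ ω * ((1/2^(m j)) * ∑ q, ψ (T ω) q))]
    refine Finset.sum_congr rfl fun a _ => Finset.sum_congr rfl fun nn _ => ?_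
    beta_reduce
    rw [hsplit (fun kk => μ (a, nn, kk) * ψ (T (a, nn, kk)) (S (a, nn, kk) j)),
        hsplit (fun kk => μ (a, nn, kk) * ((1/2^(m j)) * ∑ q, ψ (T (a, nn, kk)) q))]
    conv_lhs => rw [Finset.sum_comm]
    conv_rhs => rw [Finset.sum_comm]
    refine Finset.sum_congr rfl fun rest _ => ?_
    beta_reduce
    set c : ℝ := (1 / 2 ^ n) * (∏ i, ν i (nn i)) * ∏ i, ((1 : ℝ) / 2 ^ (m i)) with hc
    have hμc : ∀ x, μ (a, nn, e (x, rest)) = c := fun _ => rfl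
    set tv : TT := (a, fun i => a + nn i,
        fun i : {i : Fin u // i ≠ j} => (H i.1).mulVec (a + nn i.1) + rest i,
        fun i => rest i) with htv
    have hT : ∀ x, T (a, nn, e (x, rest)) = tv := by
      intro x
      have h3 : (fun i : {i : Fin u // i ≠ j} => (H i.1).mulVec (a + nn i.1) + e (x, rest) i.1)
          = (fun i : {i : Fin u // i ≠ j} => (H i.1).mulVec (a + nn i.1) + rest i) :=
        funext fun i => by rw [hene]
      have h4 : (fun i : {i : Fin u // i ≠ j} => e (x, rest) i.1)
          = (fun i : {i : Fin u // i ≠ j} => rest i) := funext fun i => by rw [hene]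
      simp only [T, S, A, htv]
      rw [h3, h4]
    have hS : ∀ x, S (a, nn, e (x, rest)) j
        = (H j).mulVec (a + nn j) + x := by
      intro x
      simp only [S, A, hej]
    simp only [hμc, hT, hS]
    have hadd : ∑ x : Fin (m j) → ZMod 2, ψ tv ((H j).mulVec (a + nn j) + x)
        = ∑ q, ψ tv q := Equiv.sum_comp (Equiv.addLeft _) (fun q => ψ tv q)
    rw [← Finset.mul_sum, hadd, Finset.sum_const, Finset.card_univ, nsmul_eq_mul,
      card_fun_zmod]
    rw [show (2:ℝ)^(m j) * (c * ((1:ℝ)/2^(m j) * ∑ q, ψ tv q))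
        = ((2:ℝ)^(m j) * ((1:ℝ)/2^(m j))) * (c * ∑ q, ψ tv q) from by ring,
      mul_one_div, div_self (by positivity), one_mul]
  -- part 1
  have part1 : ∀ sj : Fin (m j) → ZMod 2,
      prMass μ (fun ω => S ω j = sj) = 1 / 2 ^ (m j) := by
    intro sj
    rw [hprM]
    have h1 := master (fun _ q => ind (q = sj))
    beta_reduce at h1
    rw [h1]
    simp only [sum_ind_eq, mul_one]
    rw [← Finset.sum_mul, htot, one_mul]
  refine ⟨part1, ?_, ?_⟩
  · -- part 2
    intro sj tv
    rw [hprM, hprM (fun ω => T ω = tv), part1 sj]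
    have h1 := master (fun t q => ind (q = sj) * ind (t = tv))
    beta_reduce at h1
    simp only [ind_and]
    rw [h1]
    have h3 : ∀ t : TT, ∑ q : Fin (m j) → ZMod 2, ind (q = sj) * ind (t = tv)
        = ind (t = tv) := by
      intro t
      rw [← Finset.sum_mul, sum_ind_eq, one_mul]
    simp only [h3]
    rw [Finset.mul_sum]
    refine Finset.sum_congr rfl fun ω _ => by ring
  · -- part 3
    intro att dec
    rw [hprM]
    have h1 := master (fun t q =>
      ind (dec ((H j).mulVec (att t).1 + (att t).2 + q) = true))
    beta_reduce at h1
    rw [h1]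
    have h2 : ∀ t : TT, ∑ q : Fin (m j) → ZMod 2,
        ind (dec ((H j).mulVec (att t).1 + (att t).2 + q) = true)
        = (Nat.card {q : Fin (m j) → ZMod 2 // dec q = true} : ℝ) := by
      intro t
      rw [← sum_ind_card (fun q : Fin (m j) → ZMod 2 => dec q = true)]
      exact Equiv.sum_comp (Equiv.addLeft _) (fun q => ind (dec q = true))
    simp only [h2]
    unfold unifProb
    rw [card_fun_zmod, ← Finset.sum_mul, htot, one_mul]
    ring
end
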